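/- arXiv:2007.03229 — 2 statements merged into one kernel-verified Lean document; each statement's English description precedes it below -/
import Mathlib

section
/- Let k be an algebraically closed field and X a finitely generated free abelian group. For every group homomorphism t : X → kˣ there exists a group homomorphism x : X → ℝ/ℤ such that ker t = ker x, i.e. {λ ∈ X : t(λ) = 1} = {λ ∈ X : x(λ) = 0}. -/
/-!
Dividing out the kernel, it suffices to embed the finitely generated group `X ⧸ ker t ⊆ kˣ` into
`ℝ/ℤ`. By the structure theorem it is `ℤⁿ × D` with `D` finite, and `D` is cyclic because finite
subgroups of the units of a field are. A cyclic group of order `m` embeds onto `(1/m)ℤ/ℤ`, and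
`ℤⁿ`, indeed `ℤ[X]`, embeds via `p ↦ α p(α)` for a transcendental `α`: if `α p(α)` is an integer
`c`, then the integer polynomial `z p(z) - c` vanishes at `α`, hence identically, so `p = 0`.
Since `ℤⁿ` is torsion-free and `D` is torsion, the sum of the two embeddings is again injective.
-/

open Function Polynomial

theorem exists_injective_polynomial_int_addCircle :
    ∃ ψ : ℤ[X] →+ UnitAddCircle, Injective ψ := by
  have hα : Transcendental ℤ (liouvilleNumber 3) := transcendental_liouvilleNumber (by norm_num)
  refine ⟨(QuotientAddGroup.mk' _).comp
    ((aeval (liouvilleNumber 3)).toAddMonoidHom.comp (AddMonoidHom.mulLeft X)), ?_⟩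
  refine (injective_iff_map_eq_zero _).2 fun p hp => ?_
  obtain ⟨n, hn⟩ := (AddCircle.coe_eq_zero_iff _).1 hp
  have hXp : X * p = C n := transcendental_iff_injective.1 hα <| by simpa [eq_comm] using hn
  have hn0 : n = 0 := by simpa [eq_comm] using congrArg (coeff · 0) hXp
  simpa [hn0, X_ne_zero] using hXp

theorem exists_injective_finsupp_int_addCircle (ι : Type*) [Countable ι] :
    ∃ ψ : (ι →₀ ℤ) →+ UnitAddCircle, Injective ψ := by
  obtain ⟨e, he⟩ := Countable.exists_injective_nat ι
  obtain ⟨ψ, hψ⟩ := exists_injective_polynomial_int_addCircle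
  exact ⟨ψ.comp ((basisMonomials ℤ).repr.symm.toAddMonoidHom.comp
    (Finsupp.mapDomain.addMonoidHom e)),
    hψ.comp ((basisMonomials ℤ).repr.symm.injective.comp (Finsupp.mapDomain_injective he))⟩

theorem AddMonoidHom.coprod_injective {A B C : Type*} [AddCommGroup A] [AddCommGroup B]
    [AddCommGroup C] [IsAddTorsionFree A] (hB : IsAddTorsion B) {f : A →+ C} {g : B →+ C}
    (hf : Injective f) (hg : Injective g) : Injective (f.coprod g) := by
  refine (injective_iff_map_eq_zero _).2 fun ⟨a, b⟩ hab => ?_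
  replace hab : f a = -g b := eq_neg_of_add_eq_zero_left hab
  obtain ⟨n, hn, hnb⟩ := (hB b).exists_nsmul_eq_zero
  have ha : a = 0 := by
    refine (nsmul_eq_zero_iff_right hn.ne').1 ((map_eq_zero_iff f hf).1 ?_)
    rw [map_nsmul, hab, smul_neg, ← map_nsmul, hnb, map_zero, neg_zero]
  have hb : b = 0 := hg (by rw [map_zero, ← neg_eq_zero, ← hab, ha, map_zero])
  simp [ha, hb]

theorem isAddCyclic_of_injective_units {R T : Type*} [CommRing R] [IsDomain R] [AddGroup T]
    [Finite T] (g : T →+ Additive Rˣ) (hg : Injective g) : IsAddCyclic T :=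
  isCyclic_multiplicative_iff.1 <| isCyclic_of_injective_ringHom
    ((Units.coeHom R).comp (AddMonoidHom.toMultiplicativeLeft g)) (Units.val_injective.comp hg)

theorem IsAddCyclic.exists_injective_addCircle (T : Type*) [AddGroup T] [Finite T]
    [h : IsAddCyclic T] : ∃ φ : T →+ UnitAddCircle, Injective φ := by
  have : NeZero (Nat.card T) := ⟨Nat.card_pos.ne'⟩
  exact ⟨ZMod.toAddCircle.comp (zmodAddCyclicAddEquiv h).symm.toAddMonoidHom,
    (ZMod.toAddCircle_injective _).comp (zmodAddCyclicAddEquiv h).symm.injective⟩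

theorem exists_injective_addCircle_of_injective_units {R G : Type*} [CommRing R] [IsDomain R]
    [AddCommGroup G] [AddGroup.FG G] (g : G →+ Additive Rˣ) (hg : Injective g) :
    ∃ f : G →+ UnitAddCircle, Injective f := by
  obtain ⟨n, ι, _, p, hp, e, ⟨E⟩⟩ := AddCommGroup.equiv_free_prod_directSum_zmod G
  have (i : ι) : NeZero (p i ^ e i) := ⟨pow_ne_zero _ (hp i).ne_zero⟩
  have : Finite (DirectSum ι fun i => ZMod (p i ^ e i)) :=
    Finite.of_equiv _ DFinsupp.equivFunOnFintype.symm
  have := isAddCyclic_of_injective_units (g.comp (E.symm.toAddMonoidHom.comp (.inr _ _)))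
    (hg.comp (E.symm.injective.comp (Prod.mk_right_injective 0)))
  obtain ⟨ψ, hψ⟩ := exists_injective_finsupp_int_addCircle (Fin n)
  obtain ⟨φ, hφ⟩ := IsAddCyclic.exists_injective_addCircle (DirectSum ι fun i => ZMod (p i ^ e i))
  exact ⟨(ψ.coprod φ).comp E.toAddMonoidHom,
    (AddMonoidHom.coprod_injective isAddTorsion_of_finite hψ hφ).comp E.injective⟩

theorem exists_addCircle_hom_ker_eq_of_units_hom_general
    (k : Type*) [Field k]
    (X : Type*) [AddCommGroup X] [Module.Finite ℤ X]
    (t : X →+ Additive kˣ) :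
    ∃ x : X →+ AddCircle (1 : ℝ),
      {lam : X | Additive.toMul (t lam) = 1} = {lam : X | x lam = 0} := by
  have : AddGroup.FG X := Module.Finite.iff_addGroup_fg.1 ‹_›
  obtain ⟨f, hf⟩ := exists_injective_addCircle_of_injective_units (QuotientAddGroup.kerLift t)
    (QuotientAddGroup.kerLift_injective t)
  refine ⟨f.comp (QuotientAddGroup.mk' t.ker), ?_⟩
  ext lam
  simp [map_eq_zero_iff f hf]

/-- For `k` an algebraically closed field and `X` a finitely generated free abelian group,
every homomorphism `t : X → kˣ` has the same kernel as some homomorphism `x : X → ℝ/ℤ`. -/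
theorem exists_addCircle_hom_ker_eq_of_units_hom
    (k : Type*) [Field k] [IsAlgClosed k]
    (X : Type*) [AddCommGroup X] [Module.Free ℤ X] [Module.Finite ℤ X]
    (t : X →+ Additive kˣ) :
    ∃ x : X →+ AddCircle (1 : ℝ),
      {lam : X | Additive.toMul (t lam) = 1} = {lam : X | x lam = 0} :=
  exists_addCircle_hom_ker_eq_of_units_hom_general k X t
end

section
/- Let Φ be a reduced irreducible crystallographic root system in a finite-dimensional real vector space V, with base (set of simple roots) Δ, positive roots Φ⁺, and highest root γ. Let x be an element of the dual space V* lying in the closed fundamental alcove, i.e. ⟨α, x⟩ ≥ 0 for every α ∈ Δ and ⟨γ, x⟩ ≤ 1. Define S := {α ∈ Δ : ⟨α, x⟩ = 0} ∪ {−γ : if ⟨γ, x⟩ = 1}, a subset of Δ ∪ {−γ}. Then {α ∈ Φ : ⟨α, x⟩ ∈ ℤ} = ℤS ∩ Φ, where ℤS denotes the set of integer linear combinations of elements of S. -/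
/-!
A positive root `α` satisfies `0 ≤ ⟨α, x⟩ ≤ ⟨γ, x⟩ ≤ 1`, since `α` and `γ - α` are nonnegative
combinations of simple roots, on which `x` is nonnegative. So if `⟨α, x⟩` is an integer it is
`0` or `1`. A nonnegative combination on which `x` vanishes only involves simple roots vanishing
at `x`; this settles the case `0`, and in the case `1` it applies to `γ - α`, while `⟨γ, x⟩ = 1`
puts `-γ` into `S`, so `α = γ - (γ - α) ∈ ℤS`. Negative roots follow by symmetry, and the converse
inclusion holds because `x` is integral on `S`.
-/

section NonnegCombination

variable {V : Type*} [AddCommGroup V]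

def IsNonnegIntCombination (Δ : Set V) (v : V) : Prop :=
  ∃ c : V →₀ ℤ, ↑c.support ⊆ Δ ∧ v = c.sum (fun β n => n • β) ∧ ∀ β, 0 ≤ c β

theorem isNonnegIntCombination_or_neg {Δ : Set V} {v : V}
    (h : ∃ c : V →₀ ℤ, ↑c.support ⊆ Δ ∧ v = c.sum (fun β n => n • β) ∧
      ((∀ β, 0 ≤ c β) ∨ (∀ β, c β ≤ 0))) :
    IsNonnegIntCombination Δ v ∨ IsNonnegIntCombination Δ (-v) := by
  obtain ⟨c, hcΔ, rfl, hpos | hneg⟩ := h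
  · exact .inl ⟨c, hcΔ, rfl, hpos⟩
  · exact .inr ⟨-c, by rwa [Finsupp.support_neg], by simp [neg_smul, Finsupp.sum],
      fun β => by simpa using hneg β⟩

theorem IsNonnegIntCombination.mem_closure {Δ : Set V} {v : V}
    (h : IsNonnegIntCombination Δ v) : v ∈ AddSubmonoid.closure Δ := by
  obtain ⟨c, hcΔ, rfl, hpos⟩ := h
  refine AddSubmonoid.sum_mem _ fun β hβ => ?_
  show c β • β ∈ _
  rw [← Int.toNat_of_nonneg (hpos β), natCast_zsmul]
  exact AddSubmonoid.nsmul_mem _ (AddSubmonoid.subset_closure (hcΔ hβ)) _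

end NonnegCombination

section NonnegOnClosure

variable {M R F : Type*} [AddCommMonoid M] [AddCommMonoid R] [PartialOrder R]
  [IsOrderedAddMonoid R] [FunLike F M R] [AddMonoidHomClass F M R] {f : F} {Δ : Set M}

theorem nonneg_of_mem_closure (hf : ∀ α ∈ Δ, 0 ≤ f α) {v : M}
    (hv : v ∈ AddSubmonoid.closure Δ) : 0 ≤ f v := by
  induction hv using AddSubmonoid.closure_induction with
  | mem α hα => exact hf α hα
  | zero => simp
  | add a b _ _ ha hb => simpa using add_nonneg ha hb

theorem mem_closure_zero_set_of_mem_closure (hf : ∀ α ∈ Δ, 0 ≤ f α) {v : M}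
    (hv : v ∈ AddSubmonoid.closure Δ) (hfv : f v = 0) :
    v ∈ AddSubmonoid.closure {α ∈ Δ | f α = 0} := by
  induction hv using AddSubmonoid.closure_induction with
  | mem α hα => exact AddSubmonoid.subset_closure ⟨hα, hfv⟩
  | zero => exact zero_mem _
  | add a b ha hb iha ihb =>
    rw [map_add, add_eq_zero_iff_of_nonneg (nonneg_of_mem_closure hf ha)
      (nonneg_of_mem_closure hf hb)] at hfv
    exact add_mem (iha hfv.1) (ihb hfv.2)

end NonnegOnClosure

section Alcove

variable {V F : Type*} [AddCommGroup V] [FunLike F V ℝ] [AddMonoidHomClass F V ℝ]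

/-- `-γ` stands for the affine simple root `1 - γ`, which vanishes at `x` iff `x γ = 1`. -/
def vanishingAffineSimpleRoots (Δ : Set V) (γ : V) (x : F) : Set V :=
  {α ∈ Δ | x α = 0} ∪ {β : V | β = -γ ∧ x γ = 1}

theorem exists_int_eq_of_mem_closure_vanishingAffineSimpleRoots {Δ : Set V} {γ v : V} {x : F}
    (hv : v ∈ AddSubgroup.closure (vanishingAffineSimpleRoots Δ γ x)) : ∃ n : ℤ, x v = n := by
  induction hv using AddSubgroup.closure_induction with
  | mem β hβ =>
    rcases hβ with ⟨_, hβ0⟩ | ⟨rfl, hγ1⟩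
    · exact ⟨0, by simp [hβ0]⟩
    · exact ⟨-1, by simp [hγ1]⟩
  | zero => exact ⟨0, by simp⟩
  | add a b _ _ ha hb =>
    obtain ⟨m, hm⟩ := ha
    obtain ⟨k, hk⟩ := hb
    exact ⟨m + k, by simp [hm, hk]⟩
  | neg a _ ha =>
    obtain ⟨m, hm⟩ := ha
    exact ⟨-m, by simp [hm]⟩

theorem mem_closure_vanishingAffineSimpleRoots {Δ : Set V} {γ v : V} {x : F}
    (hx0 : ∀ α ∈ Δ, 0 ≤ x α) (hx1 : x γ ≤ 1) (hv : v ∈ AddSubmonoid.closure Δ)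
    (hγv : γ - v ∈ AddSubmonoid.closure Δ) (hint : ∃ n : ℤ, x v = n) :
    v ∈ AddSubgroup.closure (vanishingAffineSimpleRoots Δ γ x) := by
  have hsub : AddSubmonoid.closure {α ∈ Δ | x α = 0} ≤
      (AddSubgroup.closure (vanishingAffineSimpleRoots Δ γ x)).toAddSubmonoid :=
    AddSubmonoid.closure_le.2 fun α hα => AddSubgroup.subset_closure (.inl hα)
  obtain ⟨n, hn⟩ := hint
  have hv0 : 0 ≤ x v := nonneg_of_mem_closure hx0 hv
  have hvγ : x v ≤ x γ := by
    simpa [map_sub] using nonneg_of_mem_closure hx0 hγv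
  obtain rfl | rfl : n = 0 ∨ n = 1 := by
    have h0 : (0 : ℝ) ≤ n := hn ▸ hv0
    have h1 : (n : ℝ) ≤ 1 := hn ▸ hvγ.trans hx1
    have : 0 ≤ n ∧ n ≤ 1 := ⟨by exact_mod_cast h0, by exact_mod_cast h1⟩
    omega
  · exact hsub (mem_closure_zero_set_of_mem_closure hx0 hv (by simpa using hn))
  · have hγ1 : x γ = 1 := le_antisymm hx1 (by simpa [hn] using hvγ)
    have hγv0 : γ - v ∈ AddSubgroup.closure (vanishingAffineSimpleRoots Δ γ x) :=
      hsub (mem_closure_zero_set_of_mem_closure hx0 hγv (by simp [map_sub, hγ1, hn]))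
    have hnegγ : -γ ∈ AddSubgroup.closure (vanishingAffineSimpleRoots Δ γ x) :=
      AddSubgroup.subset_closure (.inr ⟨rfl, hγ1⟩)
    simpa using sub_mem (neg_mem hnegγ) hγv0

end Alcove

theorem roots_integral_on_alcove_point_eq_span_affine_subset_general
    (V : Type*) [AddCommGroup V] [Module ℝ V]
    (Φ : Set V)
    (coroot : V → Module.Dual ℝ V)
    (h2 : ∀ α ∈ Φ, coroot α α = 2)
    (hrefl : ∀ α ∈ Φ, ∀ β ∈ Φ, β - coroot α β • α ∈ Φ)
    (Δ : Set V)
    (hbase : ∀ α ∈ Φ, ∃ c : V →₀ ℤ, ↑c.support ⊆ Δ ∧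
      α = c.sum (fun β n => n • β) ∧ ((∀ β, 0 ≤ c β) ∨ (∀ β, c β ≤ 0)))
    (γ : V)
    (hγhigh : ∀ α ∈ Φ,
      (∃ c : V →₀ ℤ, ↑c.support ⊆ Δ ∧ α = c.sum (fun β n => n • β) ∧ ∀ β, 0 ≤ c β) →
      ∃ c : V →₀ ℤ, ↑c.support ⊆ Δ ∧ γ - α = c.sum (fun β n => n • β) ∧ ∀ β, 0 ≤ c β)
    (x : Module.Dual ℝ V)
    (hx0 : ∀ α ∈ Δ, 0 ≤ x α) (hx1 : x γ ≤ 1) :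
    {α ∈ Φ | ∃ n : ℤ, x α = n} =
      (AddSubgroup.closure ({α ∈ Δ | x α = 0} ∪ {β : V | β = -γ ∧ x γ = 1}) : Set V) ∩ Φ := by
  have hpos : ∀ α ∈ Φ, IsNonnegIntCombination Δ α → (∃ n : ℤ, x α = n) →
      α ∈ AddSubgroup.closure (vanishingAffineSimpleRoots Δ γ x) := fun α hαΦ hα hαint =>
    mem_closure_vanishingAffineSimpleRoots hx0 hx1 hα.mem_closure
      (IsNonnegIntCombination.mem_closure (hγhigh α hαΦ hα)) hαint
  ext α
  refine ⟨fun ⟨hαΦ, hαint⟩ => ⟨?_, hαΦ⟩, fun ⟨hαS, hαΦ⟩ =>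
    ⟨hαΦ, exists_int_eq_of_mem_closure_vanishingAffineSimpleRoots hαS⟩⟩
  rcases isNonnegIntCombination_or_neg (hbase α hαΦ) with hα | hα
  · exact hpos α hαΦ hα hαint
  · have hnegΦ : -α ∈ Φ := by
      simpa [h2 α hαΦ, two_smul] using hrefl α hαΦ α hαΦ
    obtain ⟨n, hn⟩ := hαint
    exact neg_neg α ▸ neg_mem (hpos (-α) hnegΦ hα ⟨-n, by simp [hn]⟩)

/-- Let `Φ` be a reduced irreducible crystallographic root system in a finite-dimensional real
vector space `V`, with base `Δ`, and highest root `γ`. If `x ∈ V*` lies in the closed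
fundamental alcove (`⟨α,x⟩ ≥ 0` for `α ∈ Δ` and `⟨γ,x⟩ ≤ 1`), and
`S = {α ∈ Δ | ⟨α,x⟩ = 0} ∪ {−γ if ⟨γ,x⟩ = 1}`, then
`{α ∈ Φ | ⟨α,x⟩ ∈ ℤ} = ℤS ∩ Φ`. -/
theorem roots_integral_on_alcove_point_eq_span_affine_subset
    (V : Type*) [AddCommGroup V] [Module ℝ V] [FiniteDimensional ℝ V]
    (Φ : Set V) (hfin : Φ.Finite) (hspan : Submodule.span ℝ Φ = ⊤)
    (coroot : V → Module.Dual ℝ V)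
    (h2 : ∀ α ∈ Φ, coroot α α = 2)
    (hint : ∀ α ∈ Φ, ∀ β ∈ Φ, ∃ n : ℤ, coroot α β = n)
    (hrefl : ∀ α ∈ Φ, ∀ β ∈ Φ, β - coroot α β • α ∈ Φ)
    (hred : ∀ α ∈ Φ, ∀ c : ℝ, c • α ∈ Φ → c = 1 ∨ c = -1)
    (hirr : ¬ ∃ Φ₁ Φ₂ : Set V, Φ₁.Nonempty ∧ Φ₂.Nonempty ∧ Φ = Φ₁ ∪ Φ₂ ∧
      ∀ α ∈ Φ₁, ∀ β ∈ Φ₂, coroot α β = 0)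
    (Δ : Set V) (hΔΦ : Δ ⊆ Φ)
    (hbase : ∀ α ∈ Φ, ∃ c : V →₀ ℤ, ↑c.support ⊆ Δ ∧
      α = c.sum (fun β n => n • β) ∧ ((∀ β, 0 ≤ c β) ∨ (∀ β, c β ≤ 0)))
    (γ : V) (hγΦ : γ ∈ Φ)
    (hγpos : ∃ c : V →₀ ℤ, ↑c.support ⊆ Δ ∧ γ = c.sum (fun β n => n • β) ∧ ∀ β, 0 ≤ c β)
    (hγhigh : ∀ α ∈ Φ,
      (∃ c : V →₀ ℤ, ↑c.support ⊆ Δ ∧ α = c.sum (fun β n => n • β) ∧ ∀ β, 0 ≤ c β) →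
      ∃ c : V →₀ ℤ, ↑c.support ⊆ Δ ∧ γ - α = c.sum (fun β n => n • β) ∧ ∀ β, 0 ≤ c β)
    (x : Module.Dual ℝ V)
    (hx0 : ∀ α ∈ Δ, 0 ≤ x α) (hx1 : x γ ≤ 1) :
    {α ∈ Φ | ∃ n : ℤ, x α = n} =
      (AddSubgroup.closure ({α ∈ Δ | x α = 0} ∪ {β : V | β = -γ ∧ x γ = 1}) : Set V) ∩ Φ :=
  roots_integral_on_alcove_point_eq_span_affine_subset_general V Φ coroot h2 hrefl Δ hbase γ hγhigh
    x hx0 hx1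
end
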